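/- arXiv:1805.10250 — 4 statements merged into one kernel-verified Lean document; each statement's English description precedes it below -/
import Mathlib

section
/- If a pinpointing state B^pin is obtained from a pinpointing state A^pin by a single pinpointing application of a rule R (A^pin ⇀_R B^pin), then for every valuation V, either the projection A_V is transformed into B_V by a (classical) application of R (A_V →_R B_V), or A_V = B_V. -/
/-- Monotone Boolean formulas over propositional variables of type `V`. -/
inductive MBF (V : Type) : Type
  | var : V → MBF V
  | top : MBF V
  | bot : MBF V
  | and : MBF V → MBF V → MBF V
  | or  : MBF V → MBF V → MBF V

/-- Satisfaction of a monotone Boolean formula by a valuation (a set of variables). -/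
def MBF.sat {V : Type} (v : Set V) : MBF V → Prop
  | .var p => p ∈ v
  | .top => True
  | .bot => False
  | .and φ ψ => φ.sat v ∧ ψ.sat v
  | .or φ ψ => φ.sat v ∨ ψ.sat v

/-- `φ` entails `ψ`: every valuation satisfying `φ` satisfies `ψ`. -/
def MBF.entails {V : Type} (φ ψ : MBF V) : Prop :=
  ∀ v : Set V, φ.sat v → ψ.sat v

/-- A rule: a pair of finite sets of consequences (premises and results). -/
structure Rule (C : Type) where
  pre : Finset C
  res : Finset C

/-- A rule `R` is applicable to a state `A` if `pre R ⊆ A` and `res R ⊄ A`. -/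
def applicable {C : Type} (R : Rule C) (A : Set C) : Prop :=
  ↑R.pre ⊆ A ∧ ¬ (↑R.res ⊆ A)

/-- Classical rule application: `A →_R B`. -/
def step {C : Type} (R : Rule C) (A B : Set C) : Prop :=
  applicable R A ∧ B = A ∪ ↑R.res

/-- One step with some rule from the fixed set of rules `Rs`. -/
def stepAny {C : Type} (Rs : Set (Rule C)) (A B : Set C) : Prop :=
  ∃ R ∈ Rs, step R A B

/-- Reflexive-transitive closure of classical rule application: `A →* B`. -/
def steps {C : Type} (Rs : Set (Rule C)) : Set C → Set C → Prop :=
  Relation.ReflTransGen (stepAny Rs)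

/-- A state is saturated if no rule (from `Rs`) is applicable to it. -/
def saturated {C : Type} (Rs : Set (Rule C)) (A : Set C) : Prop :=
  ∀ R ∈ Rs, ¬ applicable R A

/-- A pinpointing state: a labelling of a finite set of consequences with
monotone Boolean formulas (`none` = unlabelled). -/
structure PState (C V : Type) where
  lab : C → Option (MBF V)
  finite : {c : C | lab c ≠ none}.Finite

/-- The label of `α` in `A`, which is `⊥` if `α` is unlabelled. -/
def PState.labOf {C V : Type} (A : PState C V) (α : C) : MBF V :=
  (A.lab α).getD .bot

/-- `fm(X, A)`: the conjunction of the labels of the elements of `X`. -/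
noncomputable def fm {C V : Type} (X : Finset C) (A : PState C V) : MBF V :=
  (X.toList.map A.labOf).foldr .and .top

/-- `R` is pinpointing applicable to `A` if `fm(pre R, A)` does not entail `fm(res R, A)`. -/
def pinApplicable {C V : Type} (R : Rule C) (A : PState C V) : Prop :=
  ¬ (fm R.pre A).entails (fm R.res A)

open Classical in
/-- Pinpointing rule application `A ⇀_R B`: each `α ∈ res R` is relabelled with
`φ_α ∨ fm(pre R, A)` (with `φ_α = ⊥` if `α` was unlabelled); all other labels unchanged. -/
def pinStep {C V : Type} (R : Rule C) (A B : PState C V) : Prop :=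
  pinApplicable R A ∧
  ∀ α : C, B.lab α =
    if α ∈ R.res then some ((A.labOf α).or (fm R.pre A)) else A.lab α

/-- One pinpointing step with some rule from `Rs`. -/
def pinStepAny {C V : Type} (Rs : Set (Rule C)) (A B : PState C V) : Prop :=
  ∃ R ∈ Rs, pinStep R A B

/-- Reflexive-transitive closure of pinpointing rule application: `A ⇀* B`. -/
def pinSteps {C V : Type} (Rs : Set (Rule C)) : PState C V → PState C V → Prop :=
  Relation.ReflTransGen (pinStepAny Rs)

/-- A pinpointing state is pinpointing saturated if no rule is pinpointing applicable. -/
def pinSaturated {C V : Type} (Rs : Set (Rule C)) (A : PState C V) : Prop :=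
  ∀ R ∈ Rs, ¬ pinApplicable R A

/-- The projection `A_V` of a pinpointing state under a valuation `v`. -/
def PState.proj {C V : Type} (A : PState C V) (v : Set V) : Set C :=
  {α | ∃ φ, A.lab α = some φ ∧ φ.sat v}

open Classical in
/-- `O^pin`: the initial pinpointing state labelling each axiom `α ∈ O` with the
propositional variable `labv α`. -/
noncomputable def initPState {C V : Type} (labv : C → V) (O : Finset C) : PState C V :=
  ⟨fun α => if α ∈ O then some (.var (labv α)) else none,
   Set.Finite.subset O.finite_toSet (by
     intro c hc
     simp only [Set.mem_setOf_eq, ne_eq, ite_eq_right_iff, not_forall] at hc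
     exact hc.choose)⟩


/-! A pinpointing step only adds the disjunct `fm(pre R, A)` to the labels of `res R`.
Under a valuation `v` that falsifies `fm(pre R, A)` the projection is therefore unchanged;
under one that satisfies it, every premise of `R` is in `A_v` and the projection grows by
exactly `res R`, which is a classical application of `R` unless `res R ⊆ A_v` already. -/

theorem MBF.sat_foldr_and_iff {V : Type} (v : Set V) (l : List (MBF V)) :
    (l.foldr MBF.and MBF.top).sat v ↔ ∀ φ ∈ l, φ.sat v := by
  induction l with
  | nil => simp [MBF.sat]
  | cons φ l ih => simp [MBF.sat, ih]

theorem PState.sat_labOf_iff_mem_proj {C V : Type} (A : PState C V) (α : C) (v : Set V) :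
    (A.labOf α).sat v ↔ α ∈ A.proj v := by
  unfold PState.labOf PState.proj
  cases hl : A.lab α <;> simp [hl, MBF.sat]

theorem sat_fm_iff_subset_proj {C V : Type} (X : Finset C) (A : PState C V) (v : Set V) :
    (fm X A).sat v ↔ ↑X ⊆ A.proj v := by
  simp [fm, MBF.sat_foldr_and_iff, PState.sat_labOf_iff_mem_proj, Set.subset_def]

theorem step_or_eq_union_of_pre_subset {C : Type} (R : Rule C) (A : Set C) (hpre : ↑R.pre ⊆ A) :
    step R A (A ∪ ↑R.res) ∨ A = A ∪ ↑R.res := by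
  by_cases hres : ↑R.res ⊆ A
  · exact Or.inr (Set.union_eq_self_of_subset_right hres).symm
  · exact Or.inl ⟨⟨hpre, hres⟩, rfl⟩

namespace pinStep

variable {C V : Type} {R : Rule C} {A B : PState C V}

theorem mem_proj_iff (h : pinStep R A B) (v : Set V) (α : C) :
    α ∈ B.proj v ↔ α ∈ A.proj v ∨ (α ∈ R.res ∧ (fm R.pre A).sat v) := by
  have hB := h.2 α
  by_cases hα : α ∈ R.res
  · rw [if_pos hα] at hB
    rw [← PState.sat_labOf_iff_mem_proj A, PState.proj, Set.mem_ofPred_eq, hB]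
    simp [MBF.sat, hα]
  · rw [if_neg hα] at hB
    simp [PState.proj, hB, hα]

theorem proj_eq_union_of_sat (h : pinStep R A B) {v : Set V} (hpre : (fm R.pre A).sat v) :
    B.proj v = A.proj v ∪ ↑R.res := by
  ext α
  simp [h.mem_proj_iff, hpre]

theorem proj_eq_of_not_sat (h : pinStep R A B) {v : Set V} (hpre : ¬ (fm R.pre A).sat v) :
    B.proj v = A.proj v := by
  ext α
  simp [h.mem_proj_iff, hpre]

end pinStep

/-- If `A^pin ⇀_R B^pin`, then for every valuation `v`, either
`A_v →_R B_v` or `A_v = B_v`. -/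
theorem stmt0 {C V : Type} (R : Rule C) (Apin Bpin : PState C V)
    (h : pinStep R Apin Bpin) (v : Set V) :
    step R (Apin.proj v) (Bpin.proj v) ∨ Apin.proj v = Bpin.proj v := by
  by_cases hpre : (fm R.pre Apin).sat v
  · rw [h.proj_eq_union_of_sat hpre]
    exact step_or_eq_union_of_pre_subset R _ ((sat_fm_iff_subset_proj _ _ _).mp hpre)
  · exact Or.inr (h.proj_eq_of_not_sat hpre).symm
end

section
/- Let A^pin be a pinpointing state in which the label of every labelled consequence is satisfied by the full valuation V_⊤ consisting of all propositional variables, and let A be its underlying state. If a rule R is (classically) applicable to A, then R is pinpointing applicable to A^pin. -/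
lemma fm_sat_iff {C V : Type} (X : Finset C) (A : PState C V) (v : Set V) :
    (fm X A).sat v ↔ ∀ α ∈ X, (A.labOf α).sat v := by
  unfold fm
  rw [show (∀ α ∈ X, (A.labOf α).sat v) ↔ ∀ φ ∈ X.toList.map A.labOf, φ.sat v by
    simp]
  induction X.toList.map A.labOf with
  | nil => simp [MBF.sat]
  | cons h t ih => simp [MBF.sat, ih]

/-- If every label of `A^pin` is satisfied by the full valuation and a rule `R`
is classically applicable to the underlying state of `A^pin`, then `R` is pinpointing
applicable to `A^pin`. -/
theorem stmt3 {C V : Type} (Apin : PState C V)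
    (hsat : ∀ (α : C) (φ : MBF V), Apin.lab α = some φ → φ.sat Set.univ)
    (R : Rule C)
    (happ : applicable R {α : C | ∃ φ, Apin.lab α = some φ}) :
    pinApplicable R Apin := by
  intro hent
  obtain ⟨hpre, hres⟩ := happ
  have hp : (fm R.pre Apin).sat Set.univ := by
    rw [fm_sat_iff]
    intro α hα
    obtain ⟨φ, hφ⟩ := hpre hα
    have := hsat α φ hφ
    simpa [PState.labOf, hφ]
  have hr := (fm_sat_iff _ _ _).mp (hent _ hp)
  apply hres
  intro α hα
  have := hr α hα
  cases h : Apin.lab α with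
  | none => simp [PState.labOf, h, MBF.sat] at this
  | some φ => exact ⟨φ, h⟩
end

section
/- Suppose A^pin ⇀_R B^pin is a single pinpointing rule application. Then: (i) every consequence labelled in A^pin is labelled in B^pin, and its label in A^pin entails its label in B^pin; and (ii) either some consequence is labelled in B^pin but not in A^pin, or there exist a consequence α labelled in A^pin and a valuation V such that V satisfies the label of α in B^pin but does not satisfy the label of α in A^pin (i.e., the set of valuations satisfying some label strictly increases). -/
/-- If `A^pin ⇀_R B^pin`, then (i) every consequence labelled in `A^pin` is
labelled in `B^pin` and its old label entails its new one; and (ii) either some consequence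
is labelled in `B^pin` but not in `A^pin`, or some label strictly increases its set of
satisfying valuations. -/
theorem stmt4 {C V : Type} (R : Rule C) (Apin Bpin : PState C V)
    (h : pinStep R Apin Bpin) :
    (∀ (α : C) (φ : MBF V), Apin.lab α = some φ →
      ∃ ψ : MBF V, Bpin.lab α = some ψ ∧ φ.entails ψ) ∧
    ((∃ α : C, Apin.lab α = none ∧ Bpin.lab α ≠ none) ∨
     (∃ (α : C) (φ ψ : MBF V) (v : Set V),
        Apin.lab α = some φ ∧ Bpin.lab α = some ψ ∧ ψ.sat v ∧ ¬ φ.sat v)) := by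
  obtain ⟨happ, hlab⟩ := h
  constructor
  · intro α φ hφ
    by_cases hr : α ∈ R.res
    · refine ⟨(Apin.labOf α).or (fm R.pre Apin), by rw [hlab α, if_pos hr], ?_⟩
      intro v hv
      left
      rwa [PState.labOf, hφ]
    · exact ⟨φ, by rw [hlab α, if_neg hr, hφ], fun v h => h⟩
  · rw [pinApplicable, MBF.entails] at happ
    push_neg at happ
    obtain ⟨v, hpre, hres⟩ := happ
    rw [fm_sat_iff] at hres
    push_neg at hres
    obtain ⟨α, hα, hnsat⟩ := hres
    have hB : Bpin.lab α = some ((Apin.labOf α).or (fm R.pre Apin)) := by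
      rw [hlab α, if_pos hα]
    cases hA : Apin.lab α with
    | none => exact Or.inl ⟨α, hA, by rw [hB]; simp⟩
    | some φ =>
      refine Or.inr ⟨α, φ, (Apin.labOf α).or (fm R.pre Apin), v, hA, hB,
        Or.inr hpre, ?_⟩
      rwa [PState.labOf, hA] at hnsat
end

section
/- Let O be an ontology. If every sequence of classical rule applications starting from O is finite, then every sequence of pinpointing rule applications starting from O^pin is finite; that is, termination of a consequence-based algorithm transfers to its pinpointing extension. -/
/-! Every pinpointing step `A ⇀_R B` is witnessed by a valuation `v` that satisfies
`fm(pre R, A)` but not `fm(res R, A)`, and under such a `v` the projection `B_v = A_v ∪ res R`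
is strictly larger than `A_v`. All labels in a run from `O^pin` are formulas over the finitely
many variables `lab(O)`, so by pigeonhole one valuation `w` (up to its values on `lab(O)`)
witnesses infinitely many steps of an infinite run. Along the run, the sets `O ∪ A_w` (padded
with `O` because `(O^pin)_w` is in general a proper subset of `O`) form a chain whose steps are
stutters or classical rule applications; it is not eventually constant, since otherwise the
growing finite projections `A_w` would stay inside one finite set. Deleting the stutters leaves
an infinite classical run from `O`. -/

open Set Filter

section Sequences

variable {α : Type*}

lemma Monotone.eventuallyConst_of_subset {s : ℕ → Set α} (hs : Monotone s) {K : Set α}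
    (hK : K.Finite) (hsK : ∀ i, s i ⊆ K) : EventuallyConst s atTop := by
  obtain ⟨_, ⟨N, rfl⟩, hmax⟩ :=
    (hK.finite_subsets.subset (range_subset_iff.2 hsK)).exists_maximal (range_nonempty s)
  exact eventuallyConst_atTop.2 ⟨N, fun j hj => (hmax ⟨j, rfl⟩ (hs hj)).antisymm (hs hj)⟩

lemma Monotone.eventuallyConst_of_union {s : ℕ → Set α} (hs : Monotone s) {O : Set α}
    (hO : O.Finite) (hfin : ∀ i, (s i).Finite)
    (h : EventuallyConst (fun i => O ∪ s i) atTop) : EventuallyConst s atTop := by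
  obtain ⟨N, hN⟩ := eventuallyConst_atTop.1 h
  refine hs.eventuallyConst_of_subset (hO.union (hfin N)) fun i => ?_
  rcases le_total i N with hi | hi
  · exact (hs hi).trans subset_union_right
  · exact subset_union_right.trans (hN i hi).subset

lemma eq_of_forall_succ_eq {f : ℕ → α} {a b : ℕ} (hab : a ≤ b)
    (h : ∀ j, a ≤ j → j < b → f (j + 1) = f j) : f b = f a := by
  induction b, hab using Nat.le_induction with
  | base => rfl
  | succ b hab ih =>
    exact (h b hab b.lt_succ_self).trans (ih fun j hj hjb => h j hj (hjb.trans b.lt_succ_self))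

lemma exists_chain_of_not_eventuallyConst {r : α → α → Prop} {f : ℕ → α}
    (hf : ∀ i, f (i + 1) = f i ∨ r (f i) (f (i + 1))) (hne : ¬ EventuallyConst f atTop) :
    ∃ g : ℕ → α, g 0 = f 0 ∧ ∀ k, r (g k) (g (k + 1)) := by
  set T : Set ℕ := {i | f (i + 1) ≠ f i}
  have hT : T.Infinite := fun hfin => hne <| eventuallyConst_atTop_nat.2 <| by
    simpa [T, ← eventually_atTop, ← Nat.cofinite_eq_atTop] using
      hfin.eventually_cofinite_notMem
  have hconst : ∀ {a b}, a ≤ b → (∀ j ∈ T, a ≤ j → b ≤ j) → f b = f a := fun hab hgap =>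
    eq_of_forall_succ_eq hab fun j hj hjb => not_not.1 fun hjT => (hgap j hjT hj).not_gt hjb
  refine ⟨fun k => f (Nat.nth (· ∈ T) k), ?_, fun k => ?_⟩
  · exact hconst (Nat.zero_le _) fun j hj _ => Nat.nth_zero ▸ Nat.sInf_le hj
  · have hstep := (hf _).resolve_left (Nat.nth_mem_of_infinite hT k)
    rwa [← hconst (Nat.nth_strictMono hT k.lt_succ_self) fun j hj hkj =>
      not_lt.1 fun hjk => (Nat.le_nth_of_lt_nth_succ hjk hj).not_gt hkj] at hstep

end Sequences

lemma Set.Finite.exists_infinite_setOf_inter_eq {ι V : Type*} [Infinite ι] {F : Set V}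
    (hF : F.Finite) (v : ι → Set V) : ∃ w : Set V, {i | v i ∩ F = w}.Infinite := by
  have : Finite (𝒫 F) := hF.powerset.to_subtype
  obtain ⟨⟨w, _⟩, hw⟩ :=
    Finite.exists_infinite_fiber fun i => (⟨v i ∩ F, inter_subset_right⟩ : 𝒫 F)
  refine ⟨w, ?_⟩
  simpa [Set.infinite_coe_iff, Set.preimage, Subtype.ext_iff] using hw

section Pinpointing

variable {C V : Type}

def MBF.vars : MBF V → Set V
  | .var p => {p}
  | .top => ∅
  | .bot => ∅
  | .and φ ψ => φ.vars ∪ ψ.vars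
  | .or φ ψ => φ.vars ∪ ψ.vars

lemma MBF.sat_inter_iff {F : Set V} {φ : MBF V} (hφ : φ.vars ⊆ F) (v : Set V) :
    φ.sat (v ∩ F) ↔ φ.sat v := by
  induction φ with
  | var p => exact and_iff_left (hφ rfl)
  | top | bot => rfl
  | and φ ψ ihφ ihψ | or φ ψ ihφ ihψ =>
    rw [MBF.vars, union_subset_iff] at hφ
    simp only [MBF.sat, ihφ hφ.1, ihψ hφ.2]

lemma sat_fm_iff {X : Finset C} {A : PState C V} {v : Set V} :
    (fm X A).sat v ↔ ∀ α ∈ X, (A.labOf α).sat v := by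
  simp only [fm, ← Finset.mem_toList]
  induction X.toList <;> simp [MBF.sat, *]

lemma vars_fm_subset {X : Finset C} {A : PState C V} {F : Set V}
    (h : ∀ α, (A.labOf α).vars ⊆ F) : (fm X A).vars ⊆ F := by
  rw [fm]
  induction X.toList with
  | nil => exact empty_subset F
  | cons a l ih => exact union_subset (h a) ih

lemma pinApplicable_iff {R : Rule C} {A : PState C V} :
    pinApplicable R A ↔ ∃ v, (fm R.pre A).sat v ∧ ¬ (fm R.res A).sat v := by
  simp [pinApplicable, MBF.entails]

lemma PState.mem_proj_iff {A : PState C V} {v : Set V} {α : C} :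
    α ∈ A.proj v ↔ (A.labOf α).sat v := by
  rcases hα : A.lab α with _ | φ <;> simp [PState.proj, PState.labOf, MBF.sat, hα]

lemma PState.finite_proj (A : PState C V) (v : Set V) : (A.proj v).Finite :=
  A.finite.subset fun _ ⟨φ, hφ, _⟩ => by simp [hφ]

lemma labOf_of_pinStep [DecidableEq C] {R : Rule C} {A B : PState C V} (hs : pinStep R A B)
    (α : C) : B.labOf α = if α ∈ R.res then (A.labOf α).or (fm R.pre A) else A.labOf α := by
  rw [PState.labOf, hs.2 α]
  split_ifs <;> rfl

open Classical in
lemma proj_of_pinStep {R : Rule C} {A B : PState C V} (hs : pinStep R A B) (v : Set V) :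
    B.proj v = if (fm R.pre A).sat v then A.proj v ∪ ↑R.res else A.proj v := by
  ext α
  by_cases hα : α ∈ R.res <;> split_ifs <;>
    simp [PState.mem_proj_iff, labOf_of_pinStep hs, MBF.sat, *]

lemma proj_subset_proj_of_pinStep {R : Rule C} {A B : PState C V} (hs : pinStep R A B)
    (v : Set V) : A.proj v ⊆ B.proj v := by
  rw [proj_of_pinStep hs]
  split_ifs
  exacts [subset_union_left, subset_rfl]

lemma proj_ne_proj_of_pinStep {R : Rule C} {A B : PState C V} (hs : pinStep R A B) {v : Set V}
    (hpre : (fm R.pre A).sat v) (hres : ¬ (fm R.res A).sat v) : B.proj v ≠ A.proj v := by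
  obtain ⟨α, hαres, hα⟩ : ∃ α ∈ R.res, ¬ (A.labOf α).sat v := by
    simpa [sat_fm_iff] using hres
  rw [proj_of_pinStep hs, if_pos hpre]
  exact fun heq => hα (PState.mem_proj_iff.1 (heq ▸ Or.inr hαres))

lemma eq_or_step_union {R : Rule C} {A : Set C} (hpre : ↑R.pre ⊆ A) :
    A ∪ ↑R.res = A ∨ step R A (A ∪ ↑R.res) := by
  by_cases hres : ↑R.res ⊆ A
  · exact Or.inl (union_eq_self_of_subset_right hres)
  · exact Or.inr ⟨⟨hpre, hres⟩, rfl⟩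

lemma union_proj_eq_or_step_of_pinStep {R : Rule C} {A B : PState C V} (hs : pinStep R A B)
    (O : Set C) (v : Set V) :
    O ∪ B.proj v = O ∪ A.proj v ∨ step R (O ∪ A.proj v) (O ∪ B.proj v) := by
  rw [proj_of_pinStep hs]
  split_ifs with hpre
  · rw [← union_assoc]
    refine eq_or_step_union (subset_union_right.trans' fun α hα => ?_)
    exact PState.mem_proj_iff.2 (sat_fm_iff.1 hpre α hα)
  · exact Or.inl rfl

lemma vars_labOf_initPState (labv : C → V) (O : Finset C) (α : C) :
    ((initPState labv O).labOf α).vars ⊆ labv '' ↑O := by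
  by_cases hα : α ∈ O
  · simpa [initPState, PState.labOf, MBF.vars, hα] using mem_image_of_mem labv hα
  · simp [initPState, PState.labOf, MBF.vars, hα]

lemma vars_labOf_of_pinStep {R : Rule C} {A B : PState C V} {F : Set V}
    (hA : ∀ α, (A.labOf α).vars ⊆ F) (hs : pinStep R A B) (α : C) :
    (B.labOf α).vars ⊆ F := by
  classical
  rw [labOf_of_pinStep hs]
  split_ifs
  exacts [union_subset (hA α) (vars_fm_subset hA), hA α]

lemma proj_initPState_subset (labv : C → V) (O : Finset C) (v : Set V) :
    (initPState labv O).proj v ⊆ ↑O := by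
  rintro α ⟨φ, hφ, -⟩
  by_contra hα
  rw [Finset.mem_coe] at hα
  simp [initPState, hα] at hφ

end Pinpointing

theorem stmt6_general {C V : Type} (Rs : Set (Rule C)) (labv : C → V)
    (O : Finset C)
    (h : ¬ ∃ g : ℕ → Set C, g 0 = ↑O ∧ ∀ i : ℕ, stepAny Rs (g i) (g (i + 1))) :
    ¬ ∃ g : ℕ → PState C V,
        g 0 = initPState labv O ∧ ∀ i : ℕ, pinStepAny Rs (g i) (g (i + 1)) := by
  rintro ⟨g, hg0, hg⟩
  choose R hR hstep using hg
  set F : Set V := labv '' ↑O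
  have hvars : ∀ i α, ((g i).labOf α).vars ⊆ F := by
    intro i
    induction i with
    | zero => exact hg0 ▸ vars_labOf_initPState labv O
    | succ i ih => exact vars_labOf_of_pinStep ih (hstep i)
  choose v hv using fun i => pinApplicable_iff.1 (hstep i).1
  obtain ⟨w, hw⟩ := (O.finite_toSet.image labv).exists_infinite_setOf_inter_eq v
  have hsat : ∀ i ∈ {i | v i ∩ F = w}, ∀ X, (fm X (g i)).sat w ↔ (fm X (g i)).sat (v i) :=
    fun i hi X => hi ▸ MBF.sat_inter_iff (vars_fm_subset (hvars i)) (v i)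
  have hproj : ¬ EventuallyConst (fun i => (g i).proj w) atTop := by
    intro hconst
    obtain ⟨n, hn⟩ := eventuallyConst_atTop_nat.1 hconst
    obtain ⟨i, hi, hni⟩ := hw.exists_gt n
    exact proj_ne_proj_of_pinStep (hstep i) ((hsat i hi _).2 (hv i).1)
      (mt (hsat i hi _).1 (hv i).2) (hn i hni.le)
  have hmono : Monotone fun i => (g i).proj w :=
    monotone_nat_of_le_succ fun i => proj_subset_proj_of_pinStep (hstep i) w
  obtain ⟨g', hg'0, hg'⟩ := exists_chain_of_not_eventuallyConst (r := stepAny Rs)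
    (fun i => (union_proj_eq_or_step_of_pinStep (hstep i) O w).imp_right
      fun hs => ⟨R i, hR i, hs⟩)
    (mt (hmono.eventuallyConst_of_union O.finite_toSet fun i => (g i).finite_proj w) hproj)
  refine h ⟨g', ?_, hg'⟩
  rw [hg'0, hg0, union_eq_self_of_subset_right (proj_initPState_subset labv O w)]

/-- if every sequence of classical rule applications starting from `O`
is finite (there is no infinite sequence), then every sequence of pinpointing rule
applications starting from `O^pin` is finite. -/
theorem stmt6 {C V : Type} (Rs : Set (Rule C)) (labv : C → V)
    (hinj : Function.Injective labv) (O : Finset C)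
    (h : ¬ ∃ g : ℕ → Set C, g 0 = ↑O ∧ ∀ i : ℕ, stepAny Rs (g i) (g (i + 1))) :
    ¬ ∃ g : ℕ → PState C V,
        g 0 = initPState labv O ∧ ∀ i : ℕ, pinStepAny Rs (g i) (g (i + 1)) :=
  stmt6_general Rs labv O h
end
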